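/- Ellenberg–Venkatesh–Westerland braid lemma: Let G be a finite group, c ⊆ G a conjugacy class whose elements generate G, and g ∈ c. There exists an integer R such that for every r ≥ R, every tuple (g₁,…,g_r) ∈ c^r whose entries generate G is braid-equivalent to a tuple (g, g'₂,…,g'_r) whose first entry is g and whose last r−1 entries g'₂,…,g'_r generate G. -/

import Mathlib

/-- The elementary braid move `Q_i`: `w` is obtained from `v` by replacing
`(…, g_i, g_{i+1}, …)` with `(…, g_i g_{i+1} g_i⁻¹, g_i, …)`. -/
def BraidStep {G : Type*} [Group G] {r : ℕ} (v w : Fin r → G) : Prop :=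
  ∃ i : ℕ, ∃ h : i + 1 < r,
    w ⟨i, Nat.lt_of_succ_lt h⟩ =
      v ⟨i, Nat.lt_of_succ_lt h⟩ * v ⟨i + 1, h⟩ * (v ⟨i, Nat.lt_of_succ_lt h⟩)⁻¹ ∧
    w ⟨i + 1, h⟩ = v ⟨i, Nat.lt_of_succ_lt h⟩ ∧
    ∀ j : Fin r, j.val ≠ i → j.val ≠ i + 1 → w j = v j

/-- Two tuples are braid-equivalent if they are related by the equivalence relation
generated by the elementary braid moves and their inverses (the Hurwitz action of `B_r`). -/
def BraidEquiv {G : Type*} [Group G] {r : ℕ} (v w : Fin r → G) : Prop :=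
  Relation.EqvGen BraidStep v w

/-!
By pigeonhole, once `r > |G|²` some entry `u` occurs more than `n = |G|` times. Braid moves carry
`n` copies of `u` to the front (a letter moving leftwards stays unchanged and conjugates what it
passes by `u⁻¹`), giving `replicate n u ++ rest` where `rest` still contains `u` and hence still
generates `G`. Since `uⁿ = 1`, the block slides through any list without changing it; sliding it
up to an entry `y` of `rest` and passing `y` leftwards through it conjugates the whole block by
`y⁻¹` and changes nothing else. The entries of `rest` generate `G`, so the block can be conjugated
to `replicate n g`, and `g :: (replicate (n - 1) g ++ rest)` is the required tuple.

Braid moves are handled on lists, where a move is `X ++ a :: b :: Y ↦ X ++ (a b a⁻¹) :: a :: Y`.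
-/

open List

section Hurwitz

variable {G : Type*} [Group G]

def HurwitzStep (l₁ l₂ : List G) : Prop :=
  ∃ (X : List G) (a b : G) (Y : List G),
    l₁ = X ++ a :: b :: Y ∧ l₂ = X ++ (a * b * a⁻¹) :: a :: Y

def HurwitzEquiv (l₁ l₂ : List G) : Prop := Relation.EqvGen HurwitzStep l₁ l₂

namespace HurwitzEquiv

variable {l l₁ l₂ l₃ : List G}

@[refl] theorem refl (l : List G) : HurwitzEquiv l l := Relation.EqvGen.refl l

theorem symm (h : HurwitzEquiv l₁ l₂) : HurwitzEquiv l₂ l₁ := Relation.EqvGen.symm _ _ h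

theorem trans (h₁₂ : HurwitzEquiv l₁ l₂) (h₂₃ : HurwitzEquiv l₂ l₃) : HurwitzEquiv l₁ l₃ :=
  Relation.EqvGen.trans _ _ _ h₁₂ h₂₃

instance : Trans (HurwitzEquiv (G := G)) HurwitzEquiv HurwitzEquiv := ⟨trans⟩

theorem of_step (h : HurwitzStep l₁ l₂) : HurwitzEquiv l₁ l₂ := .rel _ _ h

theorem map_of_step (f : List G → List G)
    (hf : ∀ l₁ l₂, HurwitzStep l₁ l₂ → HurwitzStep (f l₁) (f l₂))
    (h : HurwitzEquiv l₁ l₂) : HurwitzEquiv (f l₁) (f l₂) := by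
  induction h with
  | rel _ _ h => exact of_step (hf _ _ h)
  | refl => rfl
  | symm _ _ _ ih => exact ih.symm
  | trans _ _ _ _ _ ih₁ ih₂ => exact ih₁.trans ih₂

theorem append_left (Z : List G) (h : HurwitzEquiv l₁ l₂) :
    HurwitzEquiv (Z ++ l₁) (Z ++ l₂) :=
  h.map_of_step (Z ++ ·) fun _ _ ⟨X, a, b, Y, h₁, h₂⟩ =>
    ⟨Z ++ X, a, b, Y, by simp [h₁], by simp [h₂]⟩

theorem cons (a : G) (h : HurwitzEquiv l₁ l₂) : HurwitzEquiv (a :: l₁) (a :: l₂) :=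
  h.append_left [a]

theorem append_right (Z : List G) (h : HurwitzEquiv l₁ l₂) :
    HurwitzEquiv (l₁ ++ Z) (l₂ ++ Z) :=
  h.map_of_step (· ++ Z) fun _ _ ⟨X, a, b, Y, h₁, h₂⟩ =>
    ⟨X, a, b, Y ++ Z, by simp [h₁], by simp [h₂]⟩

theorem length_eq (h : HurwitzEquiv l₁ l₂) : l₁.length = l₂.length := by
  induction h with
  | rel _ _ h => obtain ⟨X, a, b, Y, rfl, rfl⟩ := h; simp
  | refl => rfl
  | symm _ _ _ ih => exact ih.symm
  | trans _ _ _ _ _ ih₁ ih₂ => exact ih₁.trans ih₂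

theorem closure_eq (h : HurwitzEquiv l₁ l₂) :
    Subgroup.closure {x | x ∈ l₁} = Subgroup.closure {x | x ∈ l₂} := by
  induction h with
  | rel _ _ h =>
    obtain ⟨X, a, b, Y, rfl, rfl⟩ := h
    have mem {l : List G} {x : G} (hx : x ∈ l) : x ∈ Subgroup.closure {x | x ∈ l} :=
      Subgroup.subset_closure hx
    apply le_antisymm <;> rw [Subgroup.closure_le] <;> intro x hx <;>
      simp only [Set.mem_ofPred_eq, mem_append, mem_cons] at hx <;>
      rcases hx with hx | rfl | rfl | hx
    · exact mem (by simp [hx])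
    · exact mem (by simp)
    · have ha := mem (l := X ++ a * x * a⁻¹ :: a :: Y) (x := a) (by simp)
      have hc := mem (l := X ++ a * x * a⁻¹ :: a :: Y) (x := a * x * a⁻¹) (by simp)
      have h := mul_mem (mul_mem (inv_mem ha) hc) ha
      rwa [show a⁻¹ * (a * x * a⁻¹) * a = x by group] at h
    · exact mem (by simp [hx])
    · exact mem (by simp [hx])
    · exact mul_mem (mul_mem (mem (by simp)) (mem (by simp))) (inv_mem (mem (by simp)))
    · exact mem (by simp)
    · exact mem (by simp [hx])
  | refl => rfl
  | symm _ _ _ ih => exact ih.symm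
  | trans _ _ _ _ _ ih₁ ih₂ => exact ih₁.trans ih₂

theorem swap (a b : G) (Y : List G) :
    HurwitzEquiv (a :: b :: Y) (MulAut.conj a b :: a :: Y) :=
  of_step ⟨[], a, b, Y, rfl, rfl⟩

theorem swap_inv (a b : G) (Y : List G) :
    HurwitzEquiv (a :: b :: Y) (b :: MulAut.conj b⁻¹ a :: Y) := by
  simpa [mul_assoc] using (swap b (MulAut.conj b⁻¹ a) Y).symm

theorem append_singleton_conj (B : List G) (y : G) :
    HurwitzEquiv (B ++ [y]) (MulAut.conj B.prod y :: B) := by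
  induction B with
  | nil => simp; rfl
  | cons a B ih => simpa using (ih.cons a).trans (swap a _ B)

theorem append_singleton_map_conj (A : List G) (y : G) :
    HurwitzEquiv (A ++ [y]) (y :: A.map (MulAut.conj y⁻¹)) := by
  induction A with
  | nil => rfl
  | cons a A ih => exact (ih.cons a).trans (swap_inv a y _)

theorem append_comm_of_prod_eq_one {B : List G} (hB : B.prod = 1) (Z : List G) :
    HurwitzEquiv (B ++ Z) (Z ++ B) := by
  induction Z with
  | nil => simp; rfl
  | cons z Z ih =>
    have h := (append_singleton_conj B z).append_right Z
    rw [hB, map_one, MulAut.one_apply] at h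
    simpa using h.trans (ih.cons z)

theorem exists_cons_of_mem [DecidableEq G] {u : G} (hu : u ∈ l) :
    ∃ l', HurwitzEquiv l (u :: l') ∧ l'.count u + 1 = l.count u := by
  obtain ⟨A, Y, rfl⟩ := append_of_mem hu
  refine ⟨A.map (MulAut.conj u⁻¹) ++ Y,
    by simpa using (append_singleton_map_conj A u).append_right Y, ?_⟩
  have hA : (A.map (MulAut.conj u⁻¹)).count u = A.count u := by
    simpa using count_map_of_injective A _ (MulAut.conj u⁻¹).injective u
  rw [count_append, count_append, count_cons_self, hA]
  omega

theorem exists_replicate_append_of_le_count [DecidableEq G] (u : G) {n : ℕ}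
    (hn : n ≤ l.count u) :
    ∃ rest, HurwitzEquiv l (replicate n u ++ rest) ∧ rest.count u + n = l.count u := by
  induction n generalizing l with
  | zero => exact ⟨l, by simpa using refl l, rfl⟩
  | succ n ih =>
    obtain ⟨l', hl', hcount⟩ := exists_cons_of_mem (count_pos_iff.1 (by omega : 0 < l.count u))
    obtain ⟨rest, hrest, hcount'⟩ := ih (l := l') (by omega)
    exact ⟨rest, hl'.trans (by simpa [replicate_succ] using hrest.cons u), by omega⟩

theorem append_map_conj_of_mem {B L : List G} (hB : B.prod = 1) {y : G} (hy : y ∈ L) :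
    HurwitzEquiv (B ++ L) (B.map (MulAut.conj y⁻¹) ++ L) := by
  obtain ⟨L₁, L₂, rfl⟩ := append_of_mem hy
  have hB' : (B.map (MulAut.conj y⁻¹)).prod = 1 := by rw [← map_list_prod, hB, map_one]
  calc HurwitzEquiv (B ++ (L₁ ++ y :: L₂)) (L₁ ++ (B ++ [y]) ++ L₂) := by
        simpa using (append_comm_of_prod_eq_one hB L₁).append_right (y :: L₂)
    HurwitzEquiv _ (L₁ ++ (y :: B.map (MulAut.conj y⁻¹)) ++ L₂) :=
        ((append_singleton_map_conj B y).append_left L₁).append_right L₂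
    HurwitzEquiv _ (B.map (MulAut.conj y⁻¹) ++ (L₁ ++ y :: L₂)) := by
        simpa using (append_comm_of_prod_eq_one hB' (L₁ ++ [y])).symm.append_right L₂

theorem replicate_append_conj_of_mem_closure {n : ℕ} {L : List G} {z : G}
    (hz : z ∈ Subgroup.closure {x | x ∈ L}) {p : G} (hp : p ^ n = 1) :
    HurwitzEquiv (replicate n p ++ L) (replicate n (MulAut.conj z p) ++ L) := by
  have conj_pow_eq_one (y : G) {p : G} (hp : p ^ n = 1) : MulAut.conj y p ^ n = 1 := by
    rw [← map_pow, hp, map_one]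
  induction hz using Subgroup.closure_induction generalizing p with
  | mem y hy =>
    have h := append_map_conj_of_mem (by rw [prod_replicate, conj_pow_eq_one y hp]) hy
    simpa [mul_assoc] using h.symm
  | one => simpa using refl _
  | mul z₁ z₂ _ _ ih₁ ih₂ =>
    simpa [MulAut.mul_apply] using (ih₂ hp).trans (ih₁ (conj_pow_eq_one z₂ hp))
  | inv z _ ih =>
    simpa [mul_assoc] using (ih (conj_pow_eq_one z⁻¹ hp)).symm

theorem exists_conj_cons_of_lt_count [DecidableEq G] {u z : G} {n : ℕ} (hn : n ≠ 0)
    (hu : u ^ n = 1) (hcount : n < l.count u) (hz : z ∈ Subgroup.closure {x | x ∈ l}) :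
    ∃ L, HurwitzEquiv l (MulAut.conj z u :: L) ∧
      Subgroup.closure {x | x ∈ L} = Subgroup.closure {x | x ∈ l} := by
  obtain ⟨rest, hrest, hcount'⟩ := exists_replicate_append_of_le_count u hcount.le
  have hclosure : Subgroup.closure {x | x ∈ rest} = Subgroup.closure {x | x ∈ l} := by
    have hu_rest : u ∈ rest := count_pos_iff.1 (by omega)
    rw [hrest.closure_eq]
    congr 1
    ext y
    simp only [Set.mem_ofPred_eq, mem_append, mem_replicate]
    aesop
  obtain ⟨k, rfl⟩ := Nat.exists_eq_succ_of_ne_zero hn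
  have h := hrest.trans (replicate_append_conj_of_mem_closure (hclosure ▸ hz) hu)
  rw [replicate_succ, cons_append] at h
  refine ⟨_, h, le_antisymm ?_ ?_⟩
  · rw [h.closure_eq]
    exact Subgroup.closure_mono fun y hy => mem_cons_of_mem _ hy
  · rw [← hclosure]
    exact Subgroup.closure_mono fun y hy => mem_append_right _ hy

end HurwitzEquiv

theorem exists_ofFn_eq {α : Type*} {r : ℕ} {L : List α} (h : L.length = r) :
    ∃ w : Fin r → α, ofFn w = L := by
  subst h
  exact ⟨_, ofFn_getElem⟩

theorem braidStep_of_hurwitzStep {r : ℕ} {v w : Fin r → G}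
    (h : HurwitzStep (ofFn v) (ofFn w)) : BraidStep v w := by
  obtain ⟨X, a, b, Y, hv, hw⟩ := h
  have entry {u : Fin r → G} {L : List G} (hu : ofFn u = L) (i : Fin r) :
      u i = L[i.val]'(by simp [← hu]) := by
    subst hu; simp
  have hlen : X.length + 2 + Y.length = r := by
    have := congrArg length hv
    simp at this
    omega
  refine ⟨X.length, by omega, ?_, ?_, fun j hj₁ hj₂ => ?_⟩
  · rw [entry hv, entry hv, entry hw]; simp
  · rw [entry hv, entry hw]; simp
  · rw [entry hv, entry hw]
    rcases lt_or_ge j.val X.length with hj | hj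
    · simp only [getElem_append_left hj]
    · obtain ⟨m, hm⟩ : ∃ m, j.val - X.length = m + 2 := ⟨j.val - X.length - 2, by omega⟩
      simp only [getElem_append_right hj, hm, getElem_cons_succ]

theorem braidEquiv_of_hurwitzEquiv {r : ℕ} {v w : Fin r → G}
    (h : HurwitzEquiv (ofFn v) (ofFn w)) : BraidEquiv v w := by
  suffices ∀ l₁ l₂, HurwitzEquiv l₁ l₂ → ∀ v w : Fin r → G, ofFn v = l₁ → ofFn w = l₂ →
      BraidEquiv v w from this _ _ h v w rfl rfl
  intro l₁ l₂ h
  induction h with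
  | rel _ _ h => rintro v w rfl rfl; exact .rel _ _ (braidStep_of_hurwitzStep h)
  | refl => rintro v w rfl h; rw [ofFn_inj.1 h]; exact .refl _
  | symm _ _ _ ih => exact fun v w hv hw => .symm _ _ (ih w v hw hv)
  | trans l₁ l₂ l₃ h₁₂ _ ih₁₂ ih₂₃ =>
    rintro v w rfl hw
    obtain ⟨u, rfl⟩ := exists_ofFn_eq ((HurwitzEquiv.length_eq h₁₂).symm.trans length_ofFn)
    exact .trans _ _ _ (ih₁₂ v u rfl rfl) (ih₂₃ u w rfl hw)

theorem exists_braidEquiv_of_hurwitzEquiv_cons {r : ℕ} {v : Fin r → G} {a : G} {L : List G}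
    (h : HurwitzEquiv (ofFn v) (a :: L)) :
    ∃ w : Fin r → G, BraidEquiv v w ∧ (∀ i : Fin r, i.val = 0 → w i = a) ∧
      {x | ∃ i : Fin r, i.val ≠ 0 ∧ w i = x} = {x | x ∈ L} := by
  obtain ⟨m, rfl⟩ : ∃ m, r = m + 1 := ⟨L.length, by simpa using h.length_eq⟩
  obtain ⟨w, hw⟩ := exists_ofFn_eq (h.length_eq.symm.trans length_ofFn)
  refine ⟨w, braidEquiv_of_hurwitzEquiv (hw ▸ h), ?_⟩
  rw [ofFn_succ, cons.injEq] at hw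
  obtain ⟨rfl, rfl⟩ := hw
  refine ⟨fun i hi => by rw [(Fin.ext hi : i = 0)], Set.ext fun x => ?_⟩
  simp only [Set.mem_ofPred_eq, mem_ofFn]
  constructor
  · rintro ⟨i, hi, rfl⟩
    obtain ⟨j, rfl⟩ := Fin.exists_succ_eq.2 (Fin.ne_of_val_ne hi)
    exact ⟨j, rfl⟩
  · rintro ⟨j, rfl⟩
    exact ⟨j.succ, Nat.succ_ne_zero _, rfl⟩

end Hurwitz

theorem List.exists_lt_count_of_mul_lt_length {α : Type*} [Fintype α] [DecidableEq α]
    {l : List α} {n : ℕ} (h : Fintype.card α * n < l.length) : ∃ a, n < l.count a := by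
  by_contra! hle
  have : l.length ≤ Fintype.card α * n := calc
    l.length = (l.dedup.map (l.count ·)).sum := (sum_map_count_dedup_eq_length l).symm
    _ ≤ l.dedup.length • n := by
      simpa using sum_le_card_nsmul _ _ (forall_mem_map.2 fun a _ => hle a)
    _ ≤ Fintype.card α * n := Nat.mul_le_mul_right n (nodup_dedup l).length_le_card
  omega

theorem evw_braid_lemma_general {G : Type*} [Group G] [Finite G] (c : Set G)
    (hconj : ∃ x : G, c = {y | IsConj x y})
    (g : G) (hg : g ∈ c) :
    ∃ R : ℕ, 1 ≤ R ∧ ∀ r : ℕ, R ≤ r → ∀ v : Fin r → G, (∀ i, v i ∈ c) →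
      Subgroup.closure (Set.range v) = ⊤ →
      ∃ w : Fin r → G, BraidEquiv v w ∧
        (∀ i : Fin r, i.val = 0 → w i = g) ∧
        Subgroup.closure {x : G | ∃ i : Fin r, i.val ≠ 0 ∧ w i = x} = ⊤ := by
  classical
  obtain ⟨x, rfl⟩ := hconj
  have := Fintype.ofFinite G
  refine ⟨Fintype.card G * Fintype.card G + 1, by omega, fun r hr v hv hvgen => ?_⟩
  obtain ⟨u, hu⟩ := exists_lt_count_of_mul_lt_length (l := ofFn v) (by simpa using hr)
  obtain ⟨z, rfl⟩ : ∃ z, MulAut.conj z u = g := by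
    obtain ⟨i, rfl⟩ := mem_ofFn.1 (count_pos_iff.1 (by omega : 0 < (ofFn v).count u))
    exact isConj_iff.1 ((hv i).symm.trans hg)
  have hgen : Subgroup.closure {x | x ∈ ofFn v} = ⊤ := by
    rwa [show {x | x ∈ ofFn v} = Set.range v from Set.ext fun _ => mem_ofFn]
  obtain ⟨L, hL, hLgen⟩ := HurwitzEquiv.exists_conj_cons_of_lt_count Fintype.card_ne_zero
    pow_card_eq_one hu (hgen ▸ Subgroup.mem_top z)
  obtain ⟨w, hvw, hw₀, hw⟩ := exists_braidEquiv_of_hurwitzEquiv_cons hL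
  exact ⟨w, hvw, hw₀, by rw [hw, hLgen, hgen]⟩

/-- Ellenberg–Venkatesh–Westerland braid lemma: for `r` suitably large, every `r`-tuple
with entries in the generating conjugacy class `c` whose entries generate `G` is
braid-equivalent to a tuple whose first entry is `g` and whose remaining entries
generate `G`. -/
theorem evw_braid_lemma {G : Type*} [Group G] [Finite G] (c : Set G)
    (hconj : ∃ x : G, c = {y | IsConj x y})
    (hgen : Subgroup.closure c = ⊤) (g : G) (hg : g ∈ c) :
    ∃ R : ℕ, 1 ≤ R ∧ ∀ r : ℕ, R ≤ r → ∀ v : Fin r → G, (∀ i, v i ∈ c) →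
      Subgroup.closure (Set.range v) = ⊤ →
      ∃ w : Fin r → G, BraidEquiv v w ∧
        (∀ i : Fin r, i.val = 0 → w i = g) ∧
        Subgroup.closure {x : G | ∃ i : Fin r, i.val ≠ 0 ∧ w i = x} = ⊤ :=
  evw_braid_lemma_general c hconj g hg
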